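/- Let W be a module over a ring B and define, for submodules x,a,y,b,z of W, Γ(x,a,y,b,z) := { ω ∈ W | ∃ξ ∈ x, α ∈ a, η ∈ y, β ∈ b, ζ ∈ z : ω = ζ + α = ζ + η + ξ = ξ + β }. Then Γ(x,a,y,b,z) = (1 - P^x_a ∘ P^b_y)(z) and Γ(x,a,y,b,z) = (P^a_x - P^z_b)(y), where P^a_x is the generalized projection relation and the relation operations (composition, difference with the diagonal, image of a submodule) are as for linear relations. -/

import Mathlib

variable {R W : Type*} [Ring R] [AddCommGroup W] [Module R W]

/-- The global multiplication map `Γ(x,a,y,b,z)` of the Grassmannian geometry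
(as a set). -/
def GammaSet (x a y b z : Submodule R W) : Set W :=
  {ω | ∃ ξ ∈ x, ∃ α ∈ a, ∃ η ∈ y, ∃ β ∈ b, ∃ ζ ∈ z,
    ω = ζ + α ∧ ω = ζ + η + ξ ∧ ω = ξ + β}

/-- The generalized projection `P^a_x = { (ζ,ω) | ω ∈ x, ω - ζ ∈ a }`. -/
def genProj (x a : Submodule R W) : Submodule R (W × W) where
  carrier := {p | p.2 ∈ x ∧ p.2 - p.1 ∈ a}
  add_mem' := fun {p q} hp hq => by
    refine ⟨x.add_mem hp.1 hq.1, ?_⟩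
    have h : (p + q).2 - (p + q).1 = (p.2 - p.1) + (q.2 - q.1) := by
      show p.2 + q.2 - (p.1 + q.1) = _; abel
    rw [h]; exact a.add_mem hp.2 hq.2
  zero_mem' := ⟨x.zero_mem, by simpa using a.zero_mem⟩
  smul_mem' := fun r p hp => by
    refine ⟨x.smul_mem r hp.1, ?_⟩
    have h : (r • p).2 - (r • p).1 = r • (p.2 - p.1) := by
      show r • p.2 - r • p.1 = _; rw [smul_sub]
    rw [h]; exact a.smul_mem r hp.2

/-- Composition `G ∘ F` of linear relations. -/
def relComp (G F : Submodule R (W × W)) : Submodule R (W × W) where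
  carrier := {p | ∃ v, (p.1, v) ∈ F ∧ (v, p.2) ∈ G}
  add_mem' := fun {p q} hp hq => by
    obtain ⟨v, hv1, hv2⟩ := hp; obtain ⟨w, hw1, hw2⟩ := hq
    exact ⟨v + w, F.add_mem hv1 hw1, G.add_mem hv2 hw2⟩
  zero_mem' := ⟨0, F.zero_mem, G.zero_mem⟩
  smul_mem' := fun r p hp => by
    obtain ⟨v, hv1, hv2⟩ := hp
    exact ⟨r • v, F.smul_mem r hv1, G.smul_mem r hv2⟩

/-- The difference `F - G` of linear relations. -/
def relSub (F G : Submodule R (W × W)) : Submodule R (W × W) where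
  carrier := {p | ∃ α β, (p.1, α) ∈ F ∧ (p.1, β) ∈ G ∧ p.2 = α - β}
  add_mem' := fun {p q} hp hq => by
    obtain ⟨α, β, h1, h2, h3⟩ := hp; obtain ⟨α', β', h1', h2', h3'⟩ := hq
    refine ⟨α + α', β + β', F.add_mem h1 h1', G.add_mem h2 h2', ?_⟩
    show p.2 + q.2 = _; rw [h3, h3']; abel
  zero_mem' := ⟨0, 0, F.zero_mem, G.zero_mem, by simp⟩
  smul_mem' := fun r p hp => by
    obtain ⟨α, β, h1, h2, h3⟩ := hp
    refine ⟨r • α, r • β, F.smul_mem r h1, G.smul_mem r h2, ?_⟩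
    show r • p.2 = _; rw [h3, smul_sub]

/-- The identity relation (diagonal). -/
def relOne : Submodule R (W × W) where
  carrier := {p | p.1 = p.2}
  add_mem' := fun {p q} hp hq => by
    show p.1 + q.1 = p.2 + q.2; rw [hp, hq]
  zero_mem' := rfl
  smul_mem' := fun r p hp => by
    show r • p.1 = r • p.2; rw [hp]

/-- The image of a submodule `z` under a linear relation `F`. -/
def relImg (F : Submodule R (W × W)) (z : Submodule R W) : Submodule R W where
  carrier := {δ | ∃ γ ∈ z, (γ, δ) ∈ F}
  add_mem' := fun {p q} hp hq => by
    obtain ⟨γ, hγ, hγF⟩ := hp; obtain ⟨γ', hγ', hγF'⟩ := hq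
    exact ⟨γ + γ', z.add_mem hγ hγ', F.add_mem hγF hγF'⟩
  zero_mem' := ⟨0, z.zero_mem, F.zero_mem⟩
  smul_mem' := fun r p hp => by
    obtain ⟨γ, hγ, hγF⟩ := hp
    exact ⟨r • γ, z.smul_mem r hγ, F.smul_mem r hγF⟩

/-! Eliminating `α = η + ξ` and `β = ζ + η`, a point of `Γ(x,a,y,b,z)` is `ζ + η + ξ` with
`ξ ∈ x`, `η ∈ y`, `ζ ∈ z`, `η + ξ ∈ a`, `ζ + η ∈ b`. Both relational expressions unfold to the
same data, `-η` being the intermediate point of `P^x_a ∘ P^b_y` and the input point of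
`P^a_x - P^z_b`. -/

@[simp] lemma mem_genProj {x a : Submodule R W} {p : W × W} :
    p ∈ genProj x a ↔ p.2 ∈ x ∧ p.2 - p.1 ∈ a := Iff.rfl

@[simp] lemma mem_relComp {G F : Submodule R (W × W)} {p : W × W} :
    p ∈ relComp G F ↔ ∃ v, (p.1, v) ∈ F ∧ (v, p.2) ∈ G := Iff.rfl

@[simp] lemma mem_relSub {F G : Submodule R (W × W)} {p : W × W} :
    p ∈ relSub F G ↔ ∃ α β, (p.1, α) ∈ F ∧ (p.1, β) ∈ G ∧ p.2 = α - β := Iff.rfl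

@[simp] lemma mem_relOne {p : W × W} : p ∈ (relOne : Submodule R (W × W)) ↔ p.1 = p.2 :=
  Iff.rfl

@[simp] lemma mem_relImg {F : Submodule R (W × W)} {z : Submodule R W} {δ : W} :
    δ ∈ relImg F z ↔ ∃ γ ∈ z, (γ, δ) ∈ F := Iff.rfl

lemma mem_relImg_relOne_sub {F : Submodule R (W × W)} {z : Submodule R W} {ω : W} :
    ω ∈ relImg (relSub relOne F) z ↔ ∃ ζ ∈ z, ∃ γ, (ζ, γ) ∈ F ∧ ω = ζ - γ := by
  simp

lemma mem_gammaSet_iff {x a y b z : Submodule R W} {ω : W} :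
    ω ∈ GammaSet x a y b z ↔
      ∃ ξ ∈ x, ∃ η ∈ y, ∃ ζ ∈ z, η + ξ ∈ a ∧ ζ + η ∈ b ∧ ω = ζ + η + ξ := by
  constructor
  · rintro ⟨ξ, hξ, α, hα, η, hη, β, hβ, ζ, hζ, hωα, hωη, hωβ⟩
    have hα' : α = η + ξ := by
      rw [add_assoc] at hωη; exact add_left_cancel (hωα.symm.trans hωη)
    have hβ' : β = ζ + η := add_left_cancel (hωβ.symm.trans (hωη.trans (add_comm _ _)))
    exact ⟨ξ, hξ, η, hη, ζ, hζ, hα' ▸ hα, hβ' ▸ hβ, hωη⟩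
  · rintro ⟨ξ, hξ, η, hη, ζ, hζ, hα, hβ, rfl⟩
    exact ⟨ξ, hξ, η + ξ, hα, η, hη, ζ + η, hβ, ζ, hζ, by abel, rfl, by abel⟩

theorem gammaSet_eq_relImg_one_sub_comp (x a y b z : Submodule R W) :
    GammaSet x a y b z
      = (relImg (relSub relOne (relComp (genProj a x) (genProj y b))) z : Set W) := by
  ext ω
  simp only [SetLike.mem_coe, mem_gammaSet_iff, mem_relImg_relOne_sub, mem_relComp, mem_genProj]
  constructor
  · rintro ⟨ξ, hξ, η, hη, ζ, hζ, hα, hβ, rfl⟩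
    refine ⟨ζ, hζ, -(η + ξ), ⟨-η, ⟨neg_mem hη, ?_⟩, neg_mem hα, ?_⟩, by abel⟩
    · convert neg_mem hβ using 1; abel
    · convert neg_mem hξ using 1; abel
  · rintro ⟨ζ, hζ, γ, ⟨v, ⟨hv, hvb⟩, hγ, hγx⟩, rfl⟩
    refine ⟨v - γ, ?_, -v, neg_mem hv, ζ, hζ, ?_, ?_, by abel⟩
    · convert neg_mem hγx using 1; abel
    · convert neg_mem hγ using 1; abel
    · convert neg_mem hvb using 1; abel

theorem gammaSet_eq_relImg_genProj_sub (x a y b z : Submodule R W) :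
    GammaSet x a y b z = (relImg (relSub (genProj x a) (genProj b z)) y : Set W) := by
  ext ω
  simp only [SetLike.mem_coe, mem_gammaSet_iff, mem_relImg, mem_relSub, mem_genProj]
  constructor
  · rintro ⟨ξ, hξ, η, hη, ζ, hζ, hα, hβ, rfl⟩
    refine ⟨-η, neg_mem hη, ξ, -(ζ + η), ⟨hξ, ?_⟩, ⟨neg_mem hβ, ?_⟩, by abel⟩
    · convert hα using 1; abel
    · convert neg_mem hζ using 1; abel
  · rintro ⟨η, hη, ξ, β, ⟨hξ, hξa⟩, ⟨hβ, hβz⟩, rfl⟩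
    refine ⟨ξ, hξ, -η, neg_mem hη, η - β, ?_, ?_, ?_, by abel⟩
    · convert neg_mem hβz using 1; abel
    · convert hξa using 1; abel
    · convert neg_mem hβ using 1; abel

/-- the global multiplication map is given by
`Γ(x,a,y,b,z) = (1 - P^x_a ∘ P^b_y)(z)` and
`Γ(x,a,y,b,z) = (P^a_x - P^z_b)(y)`. -/
theorem stmt19 (x a y b z : Submodule R W) :
    GammaSet x a y b z
      = (relImg (relSub relOne (relComp (genProj a x) (genProj y b))) z : Set W) ∧
    GammaSet x a y b z
      = (relImg (relSub (genProj x a) (genProj b z)) y : Set W) :=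
  ⟨gammaSet_eq_relImg_one_sub_comp x a y b z, gammaSet_eq_relImg_genProj_sub x a y b z⟩
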